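/- arXiv:1304.7308 — 5 statements merged into one kernel-verified Lean document; each statement's English description precedes it below -/
import Mathlib

section
/- Let K be a natural number and let f : ℕ → ℕ → ℝ be a function satisfying: (a) symmetry, f x y = f y x for all x, y; (b) monotonicity in the first argument, f x y ≤ f z y whenever x ≤ z; (c) superadditivity at level K, f K y ≤ f x y + f (K − x) y for all y and all x ≤ K. Then for every D ≥ 1 and every sequence M : ℕ → ℕ with M 0 = K and M i ≤ K for all 1 ≤ i ≤ D − 1, it holds that f K K ≤ (∑_{i=1}^{D−1} f (K − M i) (M (i−1))) + f K (M (D−1)). -/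
/-- Abstract core of Claim 1: for a symmetric, monotone, superadditive-at-`K`
function `f` (playing the role of the ergodic MIMO capacity `C(x,y)`),
the cut value of any cut `M` in a `D`-layer network dominates `f K K`. -/
theorem cut_value_lower_bound
    (K : ℕ) (f : ℕ → ℕ → ℝ)
    (hsymm : ∀ x y, f x y = f y x)
    (hmono : ∀ x z y, x ≤ z → f x y ≤ f z y)
    (hsuper : ∀ x y, x ≤ K → f K y ≤ f x y + f (K - x) y)
    (D : ℕ) (hD : 1 ≤ D)
    (M : ℕ → ℕ) (hM0 : M 0 = K)
    (hM : ∀ i, 1 ≤ i → i ≤ D - 1 → M i ≤ K) :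
    f K K ≤ (∑ i ∈ Finset.Icc 1 (D - 1), f (K - M i) (M (i - 1))) + f K (M (D - 1)) := by
  induction D, hD using Nat.le_induction with
  | base => simp [hM0]
  | succ D hD ih =>
    obtain ⟨E, rfl⟩ : ∃ E, D = E + 1 := ⟨D - 1, by omega⟩
    have hMD : M (E + 1) ≤ K := hM (E + 1) (by omega) (by omega)
    have hME : M E ≤ K := by
      rcases Nat.eq_zero_or_pos E with h | h
      · subst h; simp [hM0]
      · exact hM E h (by omega)
    have ih' := ih (fun i h1 h2 => hM i h1 (by omega))
    have key : f K (M E) ≤ f (K - M (E + 1)) (M E) + f K (M (E + 1)) := by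
      have h1 := hsuper (M (E + 1)) (M E) hMD
      have h2 : f (M (E + 1)) (M E) ≤ f K (M (E + 1)) := by
        rw [hsymm]; exact hmono _ _ _ hME
      linarith
    have hstep : ∑ i ∈ Finset.Icc 1 (E + 1 + 1 - 1), f (K - M i) (M (i - 1))
        = (∑ i ∈ Finset.Icc 1 (E + 1 - 1), f (K - M i) (M (i - 1)))
          + f (K - M (E + 1)) (M (E + 1 - 1)) := by
      have : E + 1 + 1 - 1 = (E + 1 - 1) + 1 := by omega
      rw [this, Finset.sum_Icc_succ_top (by omega)]
      simp
    rw [hstep]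
    simp only [Nat.add_sub_cancel] at *
    linarith
end

section
/- Let K be a natural number and let f : ℕ → ℕ → ℝ be a function satisfying: (a) symmetry, f x y = f y x for all x, y; (b) monotonicity in the first argument, f x y ≤ f z y whenever x ≤ z; (c) superadditivity at level K, f K y ≤ f x y + f (K − x) y for all y and all x ≤ K; and additionally (d) f K 0 = 0. Fix D ≥ 1. Then the minimum, over all sequences M : ℕ → ℕ with M 0 = K and M i ≤ K for 1 ≤ i ≤ D − 1, of the quantity (∑_{i=1}^{D−1} f (K − M i) (M (i−1))) + f K (M (D−1)) equals f K K; in particular the minimum is attained at the sequence with M i = 0 for all 1 ≤ i ≤ D − 1. -/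
lemma aux_lb (K : ℕ) (f : ℕ → ℕ → ℝ)
    (hsymm : ∀ x y, f x y = f y x)
    (hmono : ∀ x z y, x ≤ z → f x y ≤ f z y)
    (hsuper : ∀ x y, x ≤ K → f K y ≤ f x y + f (K - x) y)
    (M : ℕ → ℕ) (hM0 : M 0 = K) :
    ∀ n, (∀ i, 1 ≤ i → i ≤ n → M i ≤ K) →
      f K K ≤ (∑ i ∈ Finset.Icc 1 n, f (K - M i) (M (i - 1))) + f K (M n) := by
  intro n
  induction n with
  | zero => intro _; simp [hM0]
  | succ n ih =>
    intro hle
    have h1 : f K K ≤ (∑ i ∈ Finset.Icc 1 n, f (K - M i) (M (i - 1))) + f K (M n) :=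
      ih (fun i h1 h2 => hle i h1 (h2.trans (Nat.le_succ n)))
    have hsum : (∑ i ∈ Finset.Icc 1 (n+1), f (K - M i) (M (i - 1)))
        = (∑ i ∈ Finset.Icc 1 n, f (K - M i) (M (i - 1))) + f (K - M (n+1)) (M n) := by
      rw [Finset.sum_Icc_succ_top (by omega)]
      simp
    have hMn : M n ≤ K := by
      rcases Nat.eq_zero_or_pos n with h | h
      · subst h; simp [hM0]
      · exact hle n h (Nat.le_succ n)
    have hMn1 : M (n+1) ≤ K := hle (n+1) (by omega) le_rfl
    have key : f K (M n) ≤ f (K - M (n+1)) (M n) + f K (M (n+1)) := by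
      have h2 := hsuper (M (n+1)) (M n) hMn1
      have h3 : f (M (n+1)) (M n) ≤ f K (M (n+1)) := by
        rw [hsymm]; exact hmono _ _ _ hMn
      linarith
    rw [hsum]
    linarith

/-- Equality form of Claim 1: with the extra hypothesis `f K 0 = 0`, the minimum
cut value over all admissible cut profiles `M` equals `f K K`, and it is attained
at the profile with `M i = 0` for all `1 ≤ i ≤ D - 1` (and `M 0 = K`). -/
theorem min_cut_value_eq
    (K : ℕ) (f : ℕ → ℕ → ℝ)
    (hsymm : ∀ x y, f x y = f y x)
    (hmono : ∀ x z y, x ≤ z → f x y ≤ f z y)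
    (hsuper : ∀ x y, x ≤ K → f K y ≤ f x y + f (K - x) y)
    (hzero : f K 0 = 0)
    (D : ℕ) (hD : 1 ≤ D) :
    IsLeast
      {v : ℝ | ∃ M : ℕ → ℕ, M 0 = K ∧ (∀ i, 1 ≤ i → i ≤ D - 1 → M i ≤ K) ∧
        v = (∑ i ∈ Finset.Icc 1 (D - 1), f (K - M i) (M (i - 1))) + f K (M (D - 1))}
      (f K K)
    ∧ (∑ i ∈ Finset.Icc 1 (D - 1),
          f (K - (if i = 0 then K else 0)) (if i - 1 = 0 then K else 0))
        + f K (if D - 1 = 0 then K else 0) = f K K := by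
  have hval : (∑ i ∈ Finset.Icc 1 (D - 1),
          f (K - (if i = 0 then K else 0)) (if i - 1 = 0 then K else 0))
        + f K (if D - 1 = 0 then K else 0) = f K K := by
    rcases Nat.eq_zero_or_pos (D - 1) with h | h
    · rw [h]; simp
    · have h1 : (1:ℕ) ∈ Finset.Icc 1 (D-1) := by simp; omega
      rw [Finset.sum_eq_single_of_mem 1 h1 (fun b hb hb1 => by
        simp only [Finset.mem_Icc] at hb
        have hb0 : b ≠ 0 := by omega
        have hb10 : b - 1 ≠ 0 := by omega
        simp [hb0, hb10, hzero])]
      have : D - 1 ≠ 0 := by omega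
      simp [this, hzero]
  refine ⟨⟨⟨fun i => if i = 0 then K else 0, by simp, fun i h1 h2 => by
      beta_reduce; rw [if_neg (by omega : i ≠ 0)]; exact Nat.zero_le K, hval.symm⟩, ?_⟩, hval⟩
  rintro v ⟨M, hM0, hle, rfl⟩
  exact aux_lb K f hsymm hmono hsuper M hM0 (D-1) hle
end

section
/- Let A and B be n×n Hermitian positive semidefinite complex matrices. Then det(1 + A + B) ≤ det(1 + A) · det(1 + B), where 1 denotes the n×n identity matrix and all three determinants are nonnegative real numbers. -/
/-!
Write `B = Sᴴ S`. The matrix determinant lemma gives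
`det (1 + A + B) = det (1 + A) * det (1 + S (1 + A)⁻¹ Sᴴ)`, and since `(1 + A)⁻¹ ≤ 1` in the
Loewner order, `S (1 + A)⁻¹ Sᴴ ≤ S Sᴴ`. The determinant is monotone on positive definite
matrices, so the second factor is at most `det (1 + S Sᴴ) = det (1 + Sᴴ S) = det (1 + B)`.
-/

open ComplexOrder
open scoped Matrix

namespace Matrix

variable {m n 𝕜 : Type*} [Fintype m] [Fintype n] [DecidableEq m] [DecidableEq n] [RCLike 𝕜]

theorem PosSemidef.one_le_det_one_add {P : Matrix n n 𝕜} (hP : P.PosSemidef) :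
    1 ≤ (1 + P).det := by
  have h : 1 + P = Unitary.conjStarAlgAut 𝕜 _ hP.1.eigenvectorUnitary
      (diagonal fun i => 1 + (hP.1.eigenvalues i : 𝕜)) := by
    conv_lhs => rw [hP.1.spectral_theorem]
    rw [← map_one (Unitary.conjStarAlgAut 𝕜 _ hP.1.eigenvectorUnitary), ← map_add,
      ← diagonal_one, diagonal_add]
    rfl
  rw [h, det_map, det_diagonal]
  exact Finset.one_le_prod fun i _ =>
    le_add_of_nonneg_right (RCLike.ofReal_nonneg.mpr (hP.eigenvalues_nonneg i))

theorem PosSemidef.exists_eq_conjTranspose_mul_self {P : Matrix n n 𝕜} (hP : P.PosSemidef) :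
    ∃ S : Matrix n n 𝕜, P = Sᴴ * S := by
  open scoped MatrixOrder in
  exact CStarAlgebra.nonneg_iff_eq_star_mul_self.mp hP.nonneg

theorem PosDef.det_le_det_add {X P : Matrix n n 𝕜} (hX : X.PosDef) (hP : P.PosSemidef) :
    X.det ≤ (X + P).det := by
  obtain ⟨S, rfl⟩ := hP.exists_eq_conjTranspose_mul_self
  rw [det_add_mul _ _ hX.det_pos.ne'.isUnit]
  exact le_mul_of_one_le_right hX.det_pos.le
    (hX.inv.posSemidef.mul_mul_conjTranspose_same S).one_le_det_one_add

theorem PosSemidef.one_sub_inv_one_add {A : Matrix n n 𝕜} (hA : A.PosSemidef) :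
    (1 - (1 + A)⁻¹).PosSemidef := by
  set C := 1 + A with hC_def
  have hC : C.PosDef := PosDef.one.add_posSemidef hA
  have hC_det : IsUnit C.det := hC.det_pos.ne'.isUnit
  -- `1 - C⁻¹ = C⁻¹ (C² - C) C⁻¹` and `C² - C = A + Aᴴ A`.
  have h : C⁻¹ * (A + Aᴴ * A) * C⁻¹ᴴ = 1 - C⁻¹ := by
    rw [hC.inv.isHermitian.eq, hA.isHermitian.eq]
    calc C⁻¹ * (A + A * A) * C⁻¹ = C⁻¹ * C * (C * C⁻¹) - C⁻¹ * (C * C⁻¹) := by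
          rw [hC_def]; noncomm_ring
      _ = 1 - C⁻¹ := by rw [nonsing_inv_mul _ hC_det, mul_nonsing_inv _ hC_det, one_mul, mul_one]
  exact h ▸ (hA.add (posSemidef_conjTranspose_mul_self A)).mul_mul_conjTranspose_same _

theorem det_one_add_mul_mul_conjTranspose_le {C : Matrix n n 𝕜} (hC : C.PosSemidef)
    (hC₁ : (1 - C).PosSemidef) (S : Matrix m n 𝕜) :
    (1 + S * C * Sᴴ).det ≤ (1 + S * Sᴴ).det := by
  have h : 1 + S * C * Sᴴ + S * (1 - C) * Sᴴ = 1 + S * Sᴴ := by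
    rw [Matrix.mul_sub, Matrix.sub_mul, Matrix.mul_one, add_assoc, add_sub_cancel]
  exact h ▸ (PosDef.one.add_posSemidef (hC.mul_mul_conjTranspose_same S)).det_le_det_add
    (hC₁.mul_mul_conjTranspose_same S)

end Matrix

open ComplexOrder in
/-- For Hermitian positive semidefinite `A`, `B`,
`det (1 + A + B) ≤ det (1 + A) * det (1 + B)`, all three determinants being
nonnegative real numbers (nonnegativity in the complex order means exactly
being a nonnegative real). -/
theorem det_one_add_add_le
    {n : ℕ} (A B : Matrix (Fin n) (Fin n) ℂ)
    (hA : A.PosSemidef) (hB : B.PosSemidef) :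
    0 ≤ (1 + A + B).det ∧ 0 ≤ (1 + A).det ∧ 0 ≤ (1 + B).det ∧
      (1 + A + B).det ≤ (1 + A).det * (1 + B).det := by
  have hC : (1 + A).PosDef := Matrix.PosDef.one.add_posSemidef hA
  refine ⟨(hC.add_posSemidef hB).det_pos.le, hC.det_pos.le,
    (Matrix.PosDef.one.add_posSemidef hB).det_pos.le, ?_⟩
  obtain ⟨S, rfl⟩ := hB.exists_eq_conjTranspose_mul_self
  calc (1 + A + Sᴴ * S).det = (1 + A).det * (1 + S * (1 + A)⁻¹ * Sᴴ).det :=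
        Matrix.det_add_mul _ _ hC.det_pos.ne'.isUnit
    _ ≤ (1 + A).det * (1 + S * Sᴴ).det :=
        mul_le_mul_of_nonneg_left
          (Matrix.det_one_add_mul_mul_conjTranspose_le hC.inv.posSemidef hA.one_sub_inv_one_add S)
          hC.det_pos.le
    _ = (1 + A).det * (1 + Sᴴ * S).det := by rw [Matrix.det_one_add_mul_comm]
end

section
/- Let H be an m×n complex matrix and let S be a subset of the row indices {1,…,m}. Let H_S denote the submatrix of H consisting of the rows indexed by S, and H_{Sᶜ} the submatrix consisting of the remaining rows. Then det(1 + Hᴴ H) ≤ det(1 + H_Sᴴ H_S) · det(1 + H_{Sᶜ}ᴴ H_{Sᶜ}), where 1 denotes the n×n identity matrix and Hᴴ denotes the conjugate transpose. -/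
/-!
The Gram matrix `Hᴴ H` is the sum `A + B` of the Gram matrices of the two row blocks, so it
suffices that `det (1 + A + B) ≤ det (1 + A) * det (1 + B)` for positive semidefinite `A`, `B`.
With `P = 1 + A` and `R = √B`, Sylvester's identity `det (1 + X Y) = det (1 + Y X)` gives
`det (1 + A + B) = det P * det (1 + R P⁻¹ R)`. Since `P ≥ 1` we have `P⁻¹ ≤ 1`, hence
`R P⁻¹ R ≤ R R = B` in the Loewner order, and the determinant is monotone on positive definite
matrices.
-/

open scoped ComplexOrder MatrixOrder

namespace Matrix

theorem mul_eq_add_submatrix_compl {l m n α : Type*} [Fintype m] [DecidableEq m]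
    [NonUnitalNonAssocSemiring α] (A : Matrix l m α) (B : Matrix m n α) (S : Finset m) :
    A * B = A.submatrix id (Subtype.val : {i // i ∈ S} → m) *
        B.submatrix (Subtype.val : {i // i ∈ S} → m) id +
      A.submatrix id (Subtype.val : {i // i ∈ Sᶜ} → m) *
        B.submatrix (Subtype.val : {i // i ∈ Sᶜ} → m) id := by
  ext i j
  simp only [Matrix.add_apply, mul_apply, submatrix_apply, id]
  rw [Finset.sum_coe_sort S fun k => A i k * B k j,
    Finset.sum_coe_sort Sᶜ fun k => A i k * B k j, Finset.sum_add_sum_compl]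

section PosSemidef

variable {𝕜 n : Type*} [RCLike 𝕜] [Fintype n] [DecidableEq n]

theorem IsHermitian.det_one_add {D : Matrix n n 𝕜} (hD : D.IsHermitian) :
    (1 + D).det = ∏ i, (1 + (hD.eigenvalues i : 𝕜)) := by
  have h : 1 + D = cfc (fun x : ℝ => 1 + x) D := by
    rw [cfc_add .., cfc_const_one .., cfc_id' ..]
  rw [h, hD.cfc_eq]
  simp [IsHermitian.cfc, -Unitary.conjStarAlgAut_apply]

theorem PosSemidef.one_le_det_one_add_s5 {D : Matrix n n 𝕜} (hD : D.PosSemidef) :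
    1 ≤ (1 + D).det := by
  rw [hD.isHermitian.det_one_add]
  refine Finset.one_le_prod fun i _ => le_add_of_nonneg_right ?_
  exact_mod_cast hD.eigenvalues_nonneg i

theorem PosDef.det_le_det_of_le {A B : Matrix n n 𝕜} (hA : A.PosDef) (hAB : A ≤ B) :
    A.det ≤ B.det := by
  set R := CFC.sqrt A
  have hR : IsSelfAdjoint R := (CFC.sqrt_nonneg A).isSelfAdjoint
  have hRR : R * R = A := CFC.sqrt_mul_sqrt_self A hA.posSemidef.nonneg
  have hRdet : IsUnit R.det := (isUnit_iff_isUnit_det R).mp <|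
    (CFC.isUnit_sqrt_iff A hA.posSemidef.nonneg).mpr hA.isUnit
  set C := R⁻¹ * (B - A) * R⁻¹ with hCdef
  have hC : C.PosSemidef :=
    nonneg_iff_posSemidef.mp <|
      hR.isHermitian.inv.isSelfAdjoint.conjugate_nonneg (sub_nonneg.mpr hAB)
  have hB : B = R * (1 + C) * R := by
    rw [hCdef, mul_add, mul_one, add_mul, hRR, ← mul_assoc, ← mul_assoc,
      mul_nonsing_inv _ hRdet, one_mul, mul_assoc, nonsing_inv_mul _ hRdet, mul_one, add_sub_cancel]
  calc A.det = A.det * 1 := (mul_one _).symm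
    _ ≤ A.det * (1 + C).det := mul_le_mul_of_nonneg_left hC.one_le_det_one_add_s5 hA.det_pos.le
    _ = B.det := by rw [hB, det_mul, det_mul, ← hRR, det_mul]; ring

theorem PosSemidef.inv_one_add_le_one {A : Matrix n n 𝕜} (hA : A.PosSemidef) :
    (1 + A)⁻¹ ≤ 1 := by
  set P := 1 + A
  have hP : P.PosDef := PosDef.one.add_posSemidef hA
  have hPdet : IsUnit P.det := (isUnit_iff_isUnit_det P).mp hP.isUnit
  have hAP : 0 ≤ A * P := by
    rw [mul_add, mul_one]
    exact add_nonneg hA.nonneg hA.isHermitian.isSelfAdjoint.mul_self_nonneg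
  rw [← sub_nonneg]
  calc (0 : Matrix n n 𝕜) ≤ P⁻¹ * (A * P) * P⁻¹ :=
        hP.isHermitian.inv.isSelfAdjoint.conjugate_nonneg hAP
    _ = 1 - P⁻¹ := by
      rw [mul_assoc, mul_assoc, mul_nonsing_inv _ hPdet, mul_one, eq_sub_iff_add_eq,
        ← mul_add_one, add_comm A 1]
      exact nonsing_inv_mul _ hPdet

theorem PosSemidef.det_one_add_add_le {A B : Matrix n n 𝕜} (hA : A.PosSemidef)
    (hB : B.PosSemidef) : (1 + (A + B)).det ≤ (1 + A).det * (1 + B).det := by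
  set P := 1 + A
  have hP : P.PosDef := PosDef.one.add_posSemidef hA
  have hPdet : IsUnit P.det := (isUnit_iff_isUnit_det P).mp hP.isUnit
  set R := CFC.sqrt B
  have hR : IsSelfAdjoint R := (CFC.sqrt_nonneg B).isSelfAdjoint
  have hRR : R * R = B := CFC.sqrt_mul_sqrt_self B hB.nonneg
  have hfactor : (1 + (A + B)).det = P.det * (1 + R * P⁻¹ * R).det := by
    rw [← add_assoc, ← hRR, mul_assoc, det_one_add_mul_comm, ← det_mul, mul_add, mul_one,
      ← mul_assoc, ← mul_assoc, mul_nonsing_inv _ hPdet, one_mul]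
  have hle : R * P⁻¹ * R ≤ B := by
    simpa only [mul_one, hRR] using hR.conjugate_le_conjugate hA.inv_one_add_le_one
  have hpos : (1 + R * P⁻¹ * R).PosDef :=
    PosDef.one.add_posSemidef <|
      nonneg_iff_posSemidef.mp (hR.conjugate_nonneg hP.inv.posSemidef.nonneg)
  rw [hfactor]
  exact mul_le_mul_of_nonneg_left (hpos.det_le_det_of_le (by gcongr)) hP.det_pos.le

end PosSemidef

end Matrix

open Matrix ComplexOrder in
/-- Row-splitting form of property (c): splitting the rows of `H` into those
indexed by `S` and by `Sᶜ`,
`det (1 + Hᴴ H) ≤ det (1 + H_Sᴴ H_S) * det (1 + H_{Sᶜ}ᴴ H_{Sᶜ})`. -/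
theorem det_one_add_conjTranspose_mul_le_split
    {m n : ℕ} (H : Matrix (Fin m) (Fin n) ℂ) (S : Finset (Fin m)) :
    (1 + Hᴴ * H).det ≤
      (1 + (H.submatrix (Subtype.val : {i : Fin m // i ∈ S} → Fin m) id)ᴴ *
            H.submatrix (Subtype.val : {i : Fin m // i ∈ S} → Fin m) id).det *
      (1 + (H.submatrix (Subtype.val : {i : Fin m // i ∈ Sᶜ} → Fin m) id)ᴴ *
            H.submatrix (Subtype.val : {i : Fin m // i ∈ Sᶜ} → Fin m) id).det := by
  rw [mul_eq_add_submatrix_compl Hᴴ H S, ← conjTranspose_submatrix, ← conjTranspose_submatrix]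
  exact PosSemidef.det_one_add_add_le (posSemidef_conjTranspose_mul_self _)
    (posSemidef_conjTranspose_mul_self _)
end

section
/- Let D ≥ 2 be a natural number, let σ2 > 0 and P ≥ 0 be real numbers, and let h : {0,1,…,D−1} → ℝ be arbitrary channel gains. Then min_{0 ≤ i ≤ D−1} [ log(1 + (h i)²·P/(D·σ2)) − i·log(1 + 1/(D−1)) ] ≥ ( min_{0 ≤ i ≤ D−1} log(1 + (h i)²·P/σ2) ) − log D − 1, where log denotes the natural logarithm. -/
/-- Line network (Section III): with quantization noise of variance `(D-1)σ²`
at each relay, the noisy-network-coding rate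
`min_i [log(1 + hᵢ²P/(Dσ²)) - i·log(1 + 1/(D-1))]` is within `log D + 1`
of the line network capacity `min_i log(1 + hᵢ²P/σ²)`. -/
theorem line_network_gap
    (D : ℕ) (hD : 2 ≤ D) (σ2 P : ℝ) (hσ2 : 0 < σ2) (hP : 0 ≤ P) (h : ℕ → ℝ) :
    ((Finset.range D).inf' (Finset.nonempty_range_iff.mpr (by omega))
        fun i => Real.log (1 + (h i) ^ 2 * P / σ2)) - Real.log D - 1 ≤
      (Finset.range D).inf' (Finset.nonempty_range_iff.mpr (by omega))
        fun i => Real.log (1 + (h i) ^ 2 * P / (D * σ2)) -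
          (i : ℝ) * Real.log (1 + 1 / ((D : ℝ) - 1)) := by
  have hD1 : (1:ℝ) ≤ (D:ℝ) := by exact_mod_cast Nat.one_le_of_lt hD
  have hDpos : (0:ℝ) < D := lt_of_lt_of_le one_pos hD1
  apply Finset.le_inf'
  intro i hi
  have hmem := Finset.inf'_le (b := i)
    (fun j => Real.log (1 + (h j) ^ 2 * P / σ2)) hi
  have hx : (0:ℝ) ≤ (h i) ^ 2 * P / σ2 :=
    div_nonneg (mul_nonneg (sq_nonneg _) hP) hσ2.le
  -- log(1 + x) - log D ≤ log(1 + x/D)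
  have h1 : Real.log (1 + (h i) ^ 2 * P / σ2) - Real.log D ≤
      Real.log (1 + (h i) ^ 2 * P / (D * σ2)) := by
    rw [sub_le_iff_le_add, ← Real.log_mul (by positivity) (ne_of_gt hDpos)]
    apply Real.log_le_log (by positivity)
    have heq : (1 + (h i) ^ 2 * P / ((D:ℝ) * σ2)) * D = D + (h i) ^ 2 * P / σ2 := by
      field_simp
    rw [heq]
    linarith
  -- i * log(1 + 1/(D-1)) ≤ 1
  have h2 : (i : ℝ) * Real.log (1 + 1 / ((D : ℝ) - 1)) ≤ 1 := by
    have hiD : (i : ℝ) ≤ (D : ℝ) - 1 := by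
      have : i ≤ D - 1 := by
        have := Finset.mem_range.mp hi; omega
      have : (i:ℝ) ≤ ((D - 1 : ℕ) : ℝ) := by exact_mod_cast this
      rwa [Nat.cast_sub (by omega), Nat.cast_one] at this
    have hDm1 : (0:ℝ) < (D:ℝ) - 1 := by
      have : (2:ℝ) ≤ (D:ℝ) := by exact_mod_cast hD
      linarith
    have hlogpos : 0 ≤ Real.log (1 + 1 / ((D : ℝ) - 1)) := by
      apply Real.log_nonneg; nlinarith [one_div_pos.mpr hDm1]
    have hlog : Real.log (1 + 1 / ((D : ℝ) - 1)) ≤ 1 / ((D:ℝ) - 1) := by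
      have := Real.log_le_sub_one_of_pos (x := 1 + 1 / ((D : ℝ) - 1))
        (by positivity)
      linarith
    calc (i : ℝ) * Real.log (1 + 1 / ((D : ℝ) - 1))
        ≤ ((D:ℝ) - 1) * (1 / ((D:ℝ) - 1)) := by
          exact mul_le_mul hiD hlog hlogpos (by linarith)
      _ = 1 := by field_simp
  linarith
end
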